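/- arXiv:2410.02000 — 6 statements merged into one kernel-verified Lean document; each statement's English description precedes it below -/
import Mathlib

section
/- Let m be a natural number, s_0,…,s_m ∈ ℂ support points, w_0,…,w_m ∈ ℂ barycentric weights, and ν a natural number with ν ≤ m. Suppose ∑_{k=0}^m w_k s_k^l = 0 for every natural number l < ν, and ∑_{k=0}^m w_k s_k^ν ≠ 0. Then the denominator polynomial q = ∑_{k=0}^m w_k · ∏_{j≠k} (X − s_j) ∈ ℂ[X] is nonzero, has degree exactly m − ν, and its leading coefficient equals ∑_{k=0}^m w_k s_k^ν. -/
open Polynomial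

/-!
Write `L_k = ∏_{j ≠ k} (X - s_j)` and `μ_l = ∑_k w_k s_k ^ l`. Since
`X ^ ν - s ^ ν = (X - s) · ∑_{i < ν} X ^ i s ^ (ν - 1 - i)` and `(X - s_k) L_k` is the full nodal
polynomial `P`, we get `X ^ ν q - ∑_k w_k s_k ^ ν L_k = P · ∑_{i < ν} μ_(ν - 1 - i) X ^ i = 0`.
Every `L_k` is monic of degree `m`, so `∑_k w_k s_k ^ ν L_k` has degree `m` and leading
coefficient `μ_ν ≠ 0`; dividing by `X ^ ν` gives the claim.
-/

namespace Lagrange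

open Finset

variable {R ι : Type*} [CommRing R] [DecidableEq ι]

theorem X_pow_mul_sum_C_mul_nodal_erase (S : Finset ι) (s w : ι → R) (n : ℕ)
    (h : ∀ l < n, ∑ k ∈ S, w k * s k ^ l = 0) :
    X ^ n * ∑ k ∈ S, C (w k) * nodal (S.erase k) s =
      ∑ k ∈ S, C (w k * s k ^ n) * nodal (S.erase k) s := by
  rw [← sub_eq_zero, mul_sum, ← sum_sub_distrib]
  calc ∑ k ∈ S, (X ^ n * (C (w k) * nodal (S.erase k) s) - C (w k * s k ^ n) * nodal (S.erase k) s)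
      = ∑ k ∈ S, ∑ i ∈ range n, X ^ i * C (w k * s k ^ (n - 1 - i)) * nodal S s := by
        refine sum_congr rfl fun k hk => ?_
        have hgeom := geom_sum₂_mul X (C (s k)) n
        simp only [map_mul, map_pow]
        rw [nodal_eq_mul_nodal_erase hk, ← sum_mul]
        simp only [mul_left_comm _ (C (w k)), ← mul_sum]
        linear_combination -(C (w k) * nodal (S.erase k) s) * hgeom
    _ = ∑ i ∈ range n, X ^ i * C (∑ k ∈ S, w k * s k ^ (n - 1 - i)) * nodal S s := by
        rw [sum_comm]
        simp only [map_sum, mul_sum, sum_mul]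
    _ = 0 := sum_eq_zero fun i hi => by
        rw [h _ (by grind), C_0, mul_zero, zero_mul]

section Degree

variable [Nontrivial R] (S : Finset ι) (s c : ι → R)

theorem natDegree_sum_C_mul_nodal_erase_le :
    (∑ k ∈ S, C (c k) * nodal (S.erase k) s).natDegree ≤ #S - 1 :=
  natDegree_sum_le_of_forall_le _ _ fun k hk => (natDegree_C_mul_le _ _).trans <| by
    rw [natDegree_nodal, card_erase_of_mem hk]

theorem coeff_sum_C_mul_nodal_erase :
    (∑ k ∈ S, C (c k) * nodal (S.erase k) s).coeff (#S - 1) = ∑ k ∈ S, c k := by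
  rw [finsetSum_coeff]
  refine sum_congr rfl fun k hk => ?_
  rw [coeff_C_mul, ← card_erase_of_mem hk, ← natDegree_nodal (R := R), nodal_monic.coeff_natDegree,
    mul_one]

variable {S s c}

theorem natDegree_sum_C_mul_nodal_erase (h : ∑ k ∈ S, c k ≠ 0) :
    (∑ k ∈ S, C (c k) * nodal (S.erase k) s).natDegree = #S - 1 :=
  natDegree_eq_of_le_of_coeff_ne_zero (natDegree_sum_C_mul_nodal_erase_le S s c)
    (by rwa [coeff_sum_C_mul_nodal_erase])

theorem leadingCoeff_sum_C_mul_nodal_erase (h : ∑ k ∈ S, c k ≠ 0) :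
    (∑ k ∈ S, C (c k) * nodal (S.erase k) s).leadingCoeff = ∑ k ∈ S, c k := by
  rw [leadingCoeff, natDegree_sum_C_mul_nodal_erase h, coeff_sum_C_mul_nodal_erase]

end Degree

end Lagrange

theorem denominator_exact_degree_general (m : ℕ) (s w : ℕ → ℂ) (ν : ℕ)
    (h0 : ∀ l < ν, ∑ k ∈ Finset.range (m + 1), w k * s k ^ l = 0)
    (hne : ∑ k ∈ Finset.range (m + 1), w k * s k ^ ν ≠ 0)
    (q : Polynomial ℂ)
    (hq : q = ∑ k ∈ Finset.range (m + 1),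
      C (w k) * ∏ j ∈ (Finset.range (m + 1)).erase k, (X - C (s j))) :
    q ≠ 0 ∧ q.natDegree = m - ν ∧
      q.leadingCoeff = ∑ k ∈ Finset.range (m + 1), w k * s k ^ ν := by
  simp only [← Lagrange.nodal_eq] at hq
  have hshift := hq ▸ Lagrange.X_pow_mul_sum_C_mul_nodal_erase _ s w ν h0
  have hdeg := Lagrange.natDegree_sum_C_mul_nodal_erase (s := s) hne
  have hlead := Lagrange.leadingCoeff_sum_C_mul_nodal_erase (s := s) hne
  rw [← hshift, Finset.card_range, Nat.add_sub_cancel] at hdeg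
  rw [← hshift, mul_comm, leadingCoeff_mul_X_pow] at hlead
  have hq0 : q ≠ 0 := leadingCoeff_ne_zero.mp (hlead ▸ hne)
  rw [natDegree_X_pow_mul _ hq0] at hdeg
  exact ⟨hq0, by omega, hlead⟩

/-- Denominator half of the forward direction of the paper's Theorem 3.2. -/
theorem denominator_exact_degree (m : ℕ) (s w : ℕ → ℂ) (ν : ℕ) (hν : ν ≤ m)
    (h0 : ∀ l < ν, ∑ k ∈ Finset.range (m + 1), w k * s k ^ l = 0)
    (hne : ∑ k ∈ Finset.range (m + 1), w k * s k ^ ν ≠ 0)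
    (q : Polynomial ℂ)
    (hq : q = ∑ k ∈ Finset.range (m + 1),
      C (w k) * ∏ j ∈ (Finset.range (m + 1)).erase k, (X - C (s j))) :
    q ≠ 0 ∧ q.natDegree = m - ν ∧
      q.leadingCoeff = ∑ k ∈ Finset.range (m + 1), w k * s k ^ ν :=
  denominator_exact_degree_general m s w ν h0 hne q hq
end

section
/- Let m be a natural number, s_0,…,s_m ∈ ℂ support points, w_0,…,w_m ∈ ℂ barycentric weights, f_0,…,f_m ∈ ℂ support values, and μ a natural number with μ ≤ m. Suppose ∑_{k=0}^m w_k f_k s_k^l = 0 for every natural number l < μ, and ∑_{k=0}^m w_k f_k s_k^μ ≠ 0. Then the numerator polynomial p = ∑_{k=0}^m w_k f_k · ∏_{j≠k} (X − s_j) ∈ ℂ[X] is nonzero, has degree exactly m − μ, and its leading coefficient equals ∑_{k=0}^m w_k f_k s_k^μ. -/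
open Polynomial Finset

/-- Numerator half of the forward direction of the paper's Theorem 3.2. -/
theorem numerator_exact_degree (m : ℕ) (s w f : ℕ → ℂ) (μ : ℕ) (hμ : μ ≤ m)
    (h0 : ∀ l < μ, ∑ k ∈ Finset.range (m + 1), w k * f k * s k ^ l = 0)
    (hne : ∑ k ∈ Finset.range (m + 1), w k * f k * s k ^ μ ≠ 0)
    (p : Polynomial ℂ)
    (hp : p = ∑ k ∈ Finset.range (m + 1),
      C (w k * f k) * ∏ j ∈ (Finset.range (m + 1)).erase k, (X - C (s j))) :
    p ≠ 0 ∧ p.natDegree = m - μ ∧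
      p.leadingCoeff = ∑ k ∈ Finset.range (m + 1), w k * f k * s k ^ μ := by
  set q : Polynomial ℂ := ∏ j ∈ Finset.range (m+1), (X - C (s j)) with hqdef
  have hqdeg : q.natDegree = m + 1 := by
    rw [hqdef, natDegree_prod]
    · simp [natDegree_X_sub_C, mul_comm]
    · intro i _; exact X_sub_C_ne_zero _
  have hqmonic : q.Monic := monic_prod_of_monic _ _ fun i _ => monic_X_sub_C _
  -- each Lagrange factor in terms of q's coefficients
  have hL : ∀ k ∈ Finset.range (m+1),
      (∏ j ∈ (Finset.range (m+1)).erase k, (X - C (s j)))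
        = ∑ n ∈ Finset.range (m+2), C (q.coeff n) *
            ∑ i ∈ Finset.range n, X ^ i * C (s k ^ (n - 1 - i)) := by
    intro k hk
    have hXk : (X - C (s k)) ≠ (0 : Polynomial ℂ) := X_sub_C_ne_zero _
    apply mul_right_cancel₀ hXk
    have hprod : (∏ j ∈ (Finset.range (m+1)).erase k, (X - C (s j))) * (X - C (s k)) = q := by
      rw [hqdef, mul_comm]
      exact Finset.mul_prod_erase _ (fun j => X - C (s j)) hk
    rw [hprod, Finset.sum_mul]
    have hqeval : q.eval (s k) = 0 := by
      rw [hqdef, eval_prod]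
      exact Finset.prod_eq_zero hk (by simp)
    have hrep : q = ∑ n ∈ Finset.range (m+2), C (q.coeff n) * X ^ n := by
      conv_lhs => rw [q.as_sum_range' (m+2) (by omega)]
      simp [C_mul_X_pow_eq_monomial]
    have step : ∀ n : ℕ,
        C (q.coeff n) * (∑ i ∈ Finset.range n, X ^ i * C (s k ^ (n - 1 - i))) * (X - C (s k))
          = C (q.coeff n) * X ^ n - C (q.coeff n) * C (s k ^ n) := by
      intro n
      have := geom_sum₂_mul (X : Polynomial ℂ) (C (s k)) n
      simp only [← C_pow] at this ⊢
      rw [mul_assoc, this, mul_sub]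
    calc q = (∑ n ∈ Finset.range (m+2), C (q.coeff n) * X ^ n)
            - C (q.eval (s k)) := by rw [hqeval]; simp [← hrep]
      _ = ∑ n ∈ Finset.range (m+2),
            (C (q.coeff n) * X ^ n - C (q.coeff n) * C (s k ^ n)) := by
          rw [Finset.sum_sub_distrib]
          congr 1
          rw [eval_eq_sum_range' (n := m + 2) (by omega)]
          push_cast [map_sum]
          simp [mul_comm]
      _ = _ := by
          refine (Finset.sum_congr rfl fun n _ => ?_).symm
          exact step n
  -- the coefficients of p as moment sums
  have hcoeff : ∀ i : ℕ, p.coeff i =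
      ∑ n ∈ Finset.range (m+2), q.coeff n *
        (if i < n then ∑ k ∈ Finset.range (m+1), w k * f k * s k ^ (n - 1 - i) else 0) := by
    intro i
    rw [hp, finset_sum_coeff]
    have hterm : ∀ k ∈ Finset.range (m+1),
        (C (w k * f k) * ∏ j ∈ (Finset.range (m+1)).erase k, (X - C (s j))).coeff i
          = ∑ n ∈ Finset.range (m+2), q.coeff n *
              (if i < n then w k * f k * s k ^ (n - 1 - i) else 0) := by
      intro k hk
      rw [hL k hk, coeff_C_mul, finset_sum_coeff, Finset.mul_sum]
      refine Finset.sum_congr rfl fun n _ => ?_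
      rw [coeff_C_mul, finset_sum_coeff]
      have : ∀ j ∈ Finset.range n, (X ^ j * C (s k ^ (n - 1 - j)) : Polynomial ℂ).coeff i
          = if j = i then s k ^ (n - 1 - j) else 0 := by
        intro j _
        rw [mul_comm, coeff_C_mul, coeff_X_pow]
        rcases eq_or_ne j i with h | h
        · subst h; simp
        · simp [h, h.symm]
      rw [Finset.sum_congr rfl this, Finset.sum_ite_eq' (Finset.range n) i]
      simp only [Finset.mem_range]
      split_ifs with h
      · ring
      · ring
    rw [Finset.sum_congr rfl hterm, Finset.sum_comm]
    refine Finset.sum_congr rfl fun n _ => ?_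
    rw [← Finset.mul_sum]
    congr 1
    split_ifs with h
    · rfl
    · simp
  have hq_top : q.coeff (m + 1) = 1 := by
    have := hqmonic.coeff_natDegree
    rwa [hqdeg] at this
  -- the key coefficient
  have hkey : p.coeff (m - μ) = ∑ k ∈ Finset.range (m+1), w k * f k * s k ^ μ := by
    rw [hcoeff (m - μ)]
    rw [Finset.sum_range_succ]
    have h1 : ∀ n ∈ Finset.range (m+1), q.coeff n *
        (if m - μ < n then ∑ k ∈ Finset.range (m+1), w k * f k * s k ^ (n - 1 - (m - μ)) else 0)
          = 0 := by
      intro n hn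
      rw [Finset.mem_range] at hn
      split_ifs with h
      · rw [h0 (n - 1 - (m - μ)) (by omega)]; ring
      · ring
    rw [Finset.sum_eq_zero h1, hq_top]
    have : m + 1 - 1 - (m - μ) = μ := by omega
    rw [if_pos (by omega), this, zero_add, one_mul]
  have hvanish : ∀ i, m - μ < i → p.coeff i = 0 := by
    intro i hi
    rw [hcoeff i]
    refine Finset.sum_eq_zero fun n hn => ?_
    rw [Finset.mem_range] at hn
    split_ifs with h
    · rw [h0 (n - 1 - i) (by omega)]; ring
    · ring
  have hpne : p ≠ 0 := fun h => by rw [h] at hkey; exact hne (by simpa using hkey.symm)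
  have hdeg : p.natDegree = m - μ := by
    have hle : p.natDegree ≤ m - μ := natDegree_le_iff_coeff_eq_zero.mpr hvanish
    have hge : m - μ ≤ p.natDegree :=
      le_natDegree_of_ne_zero (by rw [hkey]; exact hne)
    omega
  exact ⟨hpne, hdeg, by rw [leadingCoeff, hdeg, hkey]⟩
end

section
/- Let m be a natural number, s_0,…,s_m ∈ ℂ support points, w_0,…,w_m ∈ ℂ barycentric weights, and ν a natural number with ν ≤ m. Let q = ∑_{k=0}^m w_k · ∏_{j≠k} (X − s_j) ∈ ℂ[X]. If q is nonzero and has degree exactly m − ν, then ∑_{k=0}^m w_k s_k^l = 0 for every natural number l < ν, and ∑_{k=0}^m w_k s_k^ν ≠ 0. -/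
/-!
Write `P = ∏ⱼ (X - sⱼ)`, `Lₖ = P / (X - sₖ)` and `Qₗ = ∑ₖ wₖ sₖ^l Lₖ`, so that `Q₀ = q`. Since
`X Lₖ = P + sₖ Lₖ`, we get `X Qₗ = μₗ P + Qₗ₊₁` with `μₗ = ∑ₖ wₖ sₖ^l`, while `μₗ` is also the
coefficient of `X^m` in `Qₗ`. As long as `X^l q` has degree below `m` these two facts give
`μₗ = 0` and `Qₗ₊₁ = X^{l+1} q` inductively; hence `μₗ` is the coefficient of `X^{m-l}` in `q`
whenever `deg q + l ≤ m`, which vanishes for `l < ν` and is the leading coefficient of `q` for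
`l = ν`.
-/

open Polynomial

namespace Lagrange

variable {R ι : Type*} [CommRing R] [DecidableEq ι]

noncomputable def nodalCombination (s : Finset ι) (v c : ι → R) : R[X] :=
  ∑ i ∈ s, C (c i) * nodal (s.erase i) v

variable (s : Finset ι) (v c : ι → R)

theorem X_mul_nodalCombination :
    X * nodalCombination s v c =
      C (∑ i ∈ s, c i) * nodal s v + nodalCombination s v (fun i => c i * v i) := by
  have hterm : ∀ i ∈ s, X * (C (c i) * nodal (s.erase i) v) =
      C (c i) * nodal s v + C (c i * v i) * nodal (s.erase i) v := by
    intro i hi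
    rw [nodal_eq_mul_nodal_erase hi, C_mul]
    ring
  simp only [nodalCombination, Finset.mul_sum, Finset.sum_congr rfl hterm,
    Finset.sum_add_distrib, ← Finset.sum_mul, map_sum]

theorem coeff_nodalCombination_card_sub_one :
    (nodalCombination s v c).coeff (s.card - 1) = ∑ i ∈ s, c i := by
  nontriviality R
  simp only [nodalCombination, finsetSum_coeff, coeff_C_mul]
  refine Finset.sum_congr rfl fun i hi => ?_
  have hdeg : (nodal (s.erase i) v).natDegree = s.card - 1 := by
    rw [natDegree_nodal, Finset.card_erase_of_mem hi]
  rw [← hdeg, nodal_monic.coeff_natDegree, mul_one]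

theorem nodalCombination_mul_pow_eq_X_pow_mul {l : ℕ}
    (hl : (nodalCombination s v c).natDegree + l < s.card) :
    nodalCombination s v (fun i => c i * v i ^ l) = X ^ l * nodalCombination s v c := by
  induction l with
  | zero => simp
  | succ l ih =>
    have hQ := ih (by omega)
    have hμ : ∑ i ∈ s, c i * v i ^ l = 0 := by
      rw [← coeff_nodalCombination_card_sub_one, hQ]
      refine coeff_eq_zero_of_natDegree_lt (natDegree_mul_le.trans_lt ?_)
      have := natDegree_X_pow_le (R := R) l
      omega
    have hstep := X_mul_nodalCombination s v (fun i => c i * v i ^ l)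
    simp only [hμ, map_zero, zero_mul, zero_add, mul_assoc, ← pow_succ] at hstep
    rw [← hstep, hQ, ← mul_assoc, ← pow_succ']

theorem sum_mul_pow_eq_coeff_nodalCombination {l : ℕ}
    (hl : (nodalCombination s v c).natDegree + l < s.card) :
    ∑ i ∈ s, c i * v i ^ l = (nodalCombination s v c).coeff (s.card - 1 - l) := by
  rw [← coeff_nodalCombination_card_sub_one, nodalCombination_mul_pow_eq_X_pow_mul s v c hl,
    show s.card - 1 = s.card - 1 - l + l by omega, coeff_X_pow_mul]
  congr 1
  omega

end Lagrange

open Lagrange in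
/-- Denominator half of the converse direction of the paper's Theorem 3.2. -/
theorem denominator_degree_converse (m : ℕ) (s w : ℕ → ℂ) (ν : ℕ) (hν : ν ≤ m)
    (q : Polynomial ℂ)
    (hq : q = ∑ k ∈ Finset.range (m + 1),
      C (w k) * ∏ j ∈ (Finset.range (m + 1)).erase k, (X - C (s j)))
    (hq0 : q ≠ 0) (hdeg : q.natDegree = m - ν) :
    (∀ l < ν, ∑ k ∈ Finset.range (m + 1), w k * s k ^ l = 0) ∧
      ∑ k ∈ Finset.range (m + 1), w k * s k ^ ν ≠ 0 := by
  replace hq : q = nodalCombination (Finset.range (m + 1)) s w := hq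
  have hμ : ∀ l ≤ ν, ∑ k ∈ Finset.range (m + 1), w k * s k ^ l = q.coeff (m - l) := by
    intro l hl
    have h := sum_mul_pow_eq_coeff_nodalCombination (Finset.range (m + 1)) s w (l := l)
      (by rw [Finset.card_range, ← hq]; omega)
    rwa [Finset.card_range, ← hq, Nat.add_sub_cancel] at h
  refine ⟨fun l hl => ?_, ?_⟩
  · rw [hμ l hl.le]
    exact coeff_eq_zero_of_natDegree_lt (by omega)
  · rw [hμ ν le_rfl, ← hdeg]
    exact mt leadingCoeff_eq_zero.mp hq0
end

section
/- Let m be a natural number, s_0,…,s_m ∈ ℂ support points, w_0,…,w_m ∈ ℂ barycentric weights, f_0,…,f_m ∈ ℂ support values, and μ a natural number with μ ≤ m. Let p = ∑_{k=0}^m w_k f_k · ∏_{j≠k} (X − s_j) ∈ ℂ[X]. If p is nonzero and has degree exactly m − μ, then ∑_{k=0}^m w_k f_k s_k^l = 0 for every natural number l < μ, and ∑_{k=0}^m w_k f_k s_k^μ ≠ 0. -/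
/-
Write `L_k = ∏_{j ≠ k} (X - s_j)` (monic of degree `m`) and `P_l = ∑_k w_k f_k s_k^l`.
Since `X L_k = ∏_j (X - s_j) + s_k L_k`, as long as `P_0 = ⋯ = P_{l-1} = 0` we get
`X^l p = ∑_k w_k f_k s_k^l L_k`, whose coefficient of `X^m` is `P_l`; that is,
`P_l` is the coefficient of `X^(m-l)` in `p`. Induction on `l` now shows `P_l = 0`
for `l < μ`, as these coefficients lie above the degree `m - μ` of `p`, and `P_μ` is the
leading coefficient of `p`.
-/

open Polynomial Finset Lagrange

section BarycentricNumerator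

variable {R ι : Type*} [CommRing R] [DecidableEq ι]

noncomputable def barycentricNumerator (N : Finset ι) (s c : ι → R) : R[X] :=
  ∑ k ∈ N, C (c k) * nodal (N.erase k) s

variable (N : Finset ι) (s : ι → R)

theorem X_mul_barycentricNumerator (c : ι → R) :
    X * barycentricNumerator N s c =
      C (∑ k ∈ N, c k) * nodal N s + barycentricNumerator N s (fun k => c k * s k) := by
  have hterm : ∀ k ∈ N, X * (C (c k) * nodal (N.erase k) s) =
      C (c k) * nodal N s + C (c k * s k) * nodal (N.erase k) s := by
    intro k hk
    rw [nodal_eq_mul_nodal_erase hk, C_mul]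
    ring
  rw [barycentricNumerator, barycentricNumerator, mul_sum, sum_congr rfl hterm,
    sum_add_distrib, ← sum_mul, map_sum]

theorem X_pow_mul_barycentricNumerator {c : ι → R} {l : ℕ}
    (hvan : ∀ i < l, ∑ k ∈ N, c k * s k ^ i = 0) :
    X ^ l * barycentricNumerator N s c = barycentricNumerator N s (fun k => c k * s k ^ l) := by
  induction l with
  | zero => simp
  | succ l ih =>
    rw [pow_succ', mul_assoc, ih fun i hi => hvan i (hi.trans l.lt_succ_self),
      X_mul_barycentricNumerator, hvan l l.lt_succ_self, map_zero, zero_mul, zero_add]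
    simp only [pow_succ, mul_assoc]

theorem coeff_barycentricNumerator [Nontrivial R] (c : ι → R) :
    (barycentricNumerator N s c).coeff (#N - 1) = ∑ k ∈ N, c k := by
  rw [barycentricNumerator, finsetSum_coeff]
  refine sum_congr rfl fun k hk => ?_
  rw [coeff_C_mul, ← card_erase_of_mem hk, ← natDegree_nodal (v := s),
    nodal_monic.coeff_natDegree, mul_one]

theorem coeff_barycentricNumerator_eq_sum_mul_pow [Nontrivial R] {c : ι → R} {l : ℕ}
    (hvan : ∀ i < l, ∑ k ∈ N, c k * s k ^ i = 0) (hl : l ≤ #N - 1) :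
    (barycentricNumerator N s c).coeff (#N - 1 - l) = ∑ k ∈ N, c k * s k ^ l := by
  rw [← coeff_barycentricNumerator, ← X_pow_mul_barycentricNumerator N s hvan,
    ← coeff_X_pow_mul, Nat.sub_add_cancel hl]

end BarycentricNumerator

/-- Numerator half of the converse direction of the paper's Theorem 3.2. -/
theorem numerator_degree_converse (m : ℕ) (s w f : ℕ → ℂ) (μ : ℕ) (hμ : μ ≤ m)
    (p : Polynomial ℂ)
    (hp : p = ∑ k ∈ Finset.range (m + 1),
      C (w k * f k) * ∏ j ∈ (Finset.range (m + 1)).erase k, (X - C (s j)))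
    (hp0 : p ≠ 0) (hdeg : p.natDegree = m - μ) :
    (∀ l < μ, ∑ k ∈ Finset.range (m + 1), w k * f k * s k ^ l = 0) ∧
      ∑ k ∈ Finset.range (m + 1), w k * f k * s k ^ μ ≠ 0 := by
  replace hp : p = barycentricNumerator (range (m + 1)) s (fun k => w k * f k) := hp
  have hcard : #(range (m + 1)) - 1 = m := by simp
  have hvan : ∀ l < μ, ∑ k ∈ range (m + 1), w k * f k * s k ^ l = 0 := by
    intro l
    induction l using Nat.strong_induction_on with
    | _ l ih =>
      intro hl
      have hcoeff := coeff_barycentricNumerator_eq_sum_mul_pow (range (m + 1)) s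
        (fun i hi => ih i hi (hi.trans hl)) (by omega)
      rw [← hcoeff, ← hp, hcard]
      exact coeff_eq_zero_of_natDegree_lt (by omega)
  refine ⟨hvan, ?_⟩
  rw [← coeff_barycentricNumerator_eq_sum_mul_pow _ _ hvan (by omega), ← hp, hcard, ← hdeg]
  exact leadingCoeff_ne_zero.mpr hp0
end

section
/- Let m be a natural number, s_0,…,s_m, w_0,…,w_m, f_0,…,f_m ∈ ℂ, and let μ, ν be natural numbers with μ ≤ m and ν ≤ m. Suppose ∑_{k=0}^m w_k f_k s_k^l = 0 for all l < μ with ∑_{k=0}^m w_k f_k s_k^μ ≠ 0, and ∑_{k=0}^m w_k s_k^l = 0 for all l < ν with ∑_{k=0}^m w_k s_k^ν ≠ 0. Then, letting r(s) = (∑_{k=0}^m w_k f_k/(s − s_k)) / (∑_{k=0}^m w_k/(s − s_k)), the function s ↦ r(s)·s^{(μ:ℤ)−ν} tends to (∑_{k=0}^m w_k f_k s_k^μ)/(∑_{k=0}^m w_k s_k^ν) as s → ∞ in ℂ (along the cobounded filter). In particular r(s) = O(s^{ν−μ}) as s → ∞, i.e., the relative degree of r is ν − μ. -/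
/-!
If the moments `∑ₖ cₖ sₖ^l` vanish for `l < μ`, then, away from the nodes,
`z^(μ+1) ∑ₖ cₖ/(z - sₖ) = ∑ₖ cₖ sₖ^μ · z/(z - sₖ)`, and each `z/(z - sₖ)` tends to `1` as
`z → ∞`. Hence numerator and denominator of `r` behave like their first nonvanishing moments
times `z^-(μ+1)` and `z^-(ν+1)`, and their quotient like `z^(ν-μ)` times the ratio of moments.
-/

open Filter Bornology Topology Asymptotics

section

variable {ι 𝕜 : Type*} (t : Finset ι) (c s : ι → 𝕜)

lemma sum_div_sub_mul_pow_succ [Field 𝕜] (μ : ℕ) (h0 : ∀ l < μ, ∑ k ∈ t, c k * s k ^ l = 0)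
    (z : 𝕜) (hz : ∀ k ∈ t, z ≠ s k) :
    (∑ k ∈ t, c k / (z - s k)) * z ^ (μ + 1) = ∑ k ∈ t, c k * s k ^ μ * (z / (z - s k)) := by
  induction μ with
  | zero =>
    rw [Finset.sum_mul]
    exact Finset.sum_congr rfl fun k _ => by ring
  | succ μ ih =>
    -- the `z`-terms of `step` sum to `z` times the vanishing `μ`-th moment
    have step : ∀ k ∈ t, c k * s k ^ μ * (z / (z - s k)) * z
        = c k * s k ^ μ * z + c k * s k ^ (μ + 1) * (z / (z - s k)) := by
      intro k hk
      have : z - s k ≠ 0 := sub_ne_zero.2 (hz k hk)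
      field_simp
      ring
    rw [pow_succ, ← mul_assoc, ih (fun l hl => h0 l (hl.trans μ.lt_succ_self)), Finset.sum_mul,
      Finset.sum_congr rfl step, Finset.sum_add_distrib, ← Finset.sum_mul, h0 μ μ.lt_succ_self,
      zero_mul, zero_add]

variable [NormedField 𝕜]

lemma tendsto_div_sub_cobounded (a : 𝕜) :
    Tendsto (fun z : 𝕜 => z / (z - a)) (cobounded 𝕜) (𝓝 1) := by
  have h : Tendsto (fun z : 𝕜 => 1 - a * z⁻¹) (cobounded 𝕜) (𝓝 1) := by
    simpa using tendsto_const_nhds.sub (tendsto_const_nhds.mul (tendsto_inv₀_cobounded (α := 𝕜)))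
  have h' := h.inv₀ one_ne_zero
  rw [inv_one] at h'
  refine h'.congr' ?_
  filter_upwards [eventually_ne_cobounded 0] with z hz
  field_simp

lemma tendsto_sum_div_sub_mul_pow_succ (μ : ℕ) (h0 : ∀ l < μ, ∑ k ∈ t, c k * s k ^ l = 0) :
    Tendsto (fun z : 𝕜 => (∑ k ∈ t, c k / (z - s k)) * z ^ (μ + 1)) (cobounded 𝕜)
      (𝓝 (∑ k ∈ t, c k * s k ^ μ)) := by
  have hnodes : ∀ᶠ z in cobounded 𝕜, ∀ k ∈ t, z ≠ s k :=
    t.eventually_all.2 fun k _ => eventually_ne_cobounded (s k)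
  have hterms := tendsto_finsetSum t fun k _ =>
    (tendsto_div_sub_cobounded (s k)).const_mul (c k * s k ^ μ)
  simp only [mul_one] at hterms
  refine hterms.congr' ?_
  filter_upwards [hnodes] with z hz
  exact (sum_div_sub_mul_pow_succ t c s μ h0 z hz).symm

end

lemma isBigO_zpow_neg_of_tendsto_mul_zpow {𝕜 : Type*} [NormedField 𝕜] {f : 𝕜 → 𝕜} {n : ℤ}
    {a : 𝕜} (h : Tendsto (fun z => f z * z ^ n) (cobounded 𝕜) (𝓝 a)) :
    f =O[cobounded 𝕜] fun z => z ^ (-n) := by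
  refine ((h.isBigO_one 𝕜).mul (isBigO_refl (fun z : 𝕜 => z ^ (-n)) _)).congr' ?_ (by simp)
  filter_upwards [eventually_ne_cobounded 0] with z hz
  rw [mul_assoc, ← zpow_add₀ hz, add_neg_cancel, zpow_zero, mul_one]

theorem barycentric_relative_degree_general (m : ℕ) (s w f : ℕ → ℂ) (μ ν : ℕ)
    (hnum0 : ∀ l < μ, ∑ k ∈ Finset.range (m + 1), w k * f k * s k ^ l = 0)
    (hden0 : ∀ l < ν, ∑ k ∈ Finset.range (m + 1), w k * s k ^ l = 0)
    (hden : ∑ k ∈ Finset.range (m + 1), w k * s k ^ ν ≠ 0)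
    (r : ℂ → ℂ)
    (hr : ∀ z : ℂ, r z = (∑ k ∈ Finset.range (m + 1), w k * f k / (z - s k)) /
      (∑ k ∈ Finset.range (m + 1), w k / (z - s k))) :
    Filter.Tendsto (fun z : ℂ => r z * z ^ ((μ : ℤ) - ν)) (Bornology.cobounded ℂ)
      (nhds ((∑ k ∈ Finset.range (m + 1), w k * f k * s k ^ μ) /
        (∑ k ∈ Finset.range (m + 1), w k * s k ^ ν))) ∧
    r =O[Bornology.cobounded ℂ] fun z : ℂ => z ^ ((ν : ℤ) - μ) := by
  have hquot := (tendsto_sum_div_sub_mul_pow_succ _ _ s μ hnum0).div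
    (tendsto_sum_div_sub_mul_pow_succ _ w s ν hden0) hden
  have htend : Tendsto (fun z : ℂ => r z * z ^ ((μ : ℤ) - ν)) (cobounded ℂ)
      (𝓝 ((∑ k ∈ Finset.range (m + 1), w k * f k * s k ^ μ) /
        (∑ k ∈ Finset.range (m + 1), w k * s k ^ ν))) := by
    refine hquot.congr' ?_
    filter_upwards [eventually_ne_cobounded 0] with z hz
    have hzpow : z ^ ((μ : ℤ) - ν) = z ^ (μ + 1) / z ^ (ν + 1) := by
      rw [← zpow_natCast, ← zpow_natCast, ← zpow_sub₀ hz]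
      push_cast
      ring_nf
    rw [hr z, hzpow, div_mul_div_comm]
    rfl
  exact ⟨htend, neg_sub (μ : ℤ) ν ▸ isBigO_zpow_neg_of_tendsto_mul_zpow htend⟩

/-- Relative-degree conclusion of the paper's Theorem 3.2: the interpolatory
barycentric rational function `r` satisfies `r(s) ~ c · s^(ν-μ)` as `s → ∞`,
so that its relative degree is `ν - μ`. -/
theorem barycentric_relative_degree (m : ℕ) (s w f : ℕ → ℂ) (μ ν : ℕ)
    (hμ : μ ≤ m) (hν : ν ≤ m)
    (hnum0 : ∀ l < μ, ∑ k ∈ Finset.range (m + 1), w k * f k * s k ^ l = 0)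
    (hnum : ∑ k ∈ Finset.range (m + 1), w k * f k * s k ^ μ ≠ 0)
    (hden0 : ∀ l < ν, ∑ k ∈ Finset.range (m + 1), w k * s k ^ l = 0)
    (hden : ∑ k ∈ Finset.range (m + 1), w k * s k ^ ν ≠ 0)
    (r : ℂ → ℂ)
    (hr : ∀ z : ℂ, r z = (∑ k ∈ Finset.range (m + 1), w k * f k / (z - s k)) /
      (∑ k ∈ Finset.range (m + 1), w k / (z - s k))) :
    Filter.Tendsto (fun z : ℂ => r z * z ^ ((μ : ℤ) - ν)) (Bornology.cobounded ℂ)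
      (nhds ((∑ k ∈ Finset.range (m + 1), w k * f k * s k ^ μ) /
        (∑ k ∈ Finset.range (m + 1), w k * s k ^ ν))) ∧
    r =O[Bornology.cobounded ℂ] fun z : ℂ => z ^ ((ν : ℤ) - μ) :=
  barycentric_relative_degree_general m s w f μ ν hnum0 hden0 hden r hr
end

section
/- Let m be a natural number, s_0,…,s_m, w_0,…,w_m, f_0,…,f_m ∈ ℂ, and let μ, ν be natural numbers with μ ≤ m and ν ≤ m. Suppose ∑_{k=0}^m w_k f_k s_k^l = 0 for all l < μ and ∑_{k=0}^m w_k s_k^l = 0 for all l < ν. Then for every s ∈ ℂ with |s| > max_{0≤k≤m} |s_k| such that ∑_{k=0}^m w_k/(s − s_k) ≠ 0, one has the asymptotic-form identity (∑_{k=0}^m w_k f_k/(s − s_k)) / (∑_{k=0}^m w_k/(s − s_k)) = s^{(ν:ℤ)−μ} · (∑_{l=0}^∞ (∑_{k=0}^m w_k f_k s_k^{μ+l})·s^{−l}) / (∑_{l=0}^∞ (∑_{k=0}^m w_k s_k^{ν+l})·s^{−l}), where both series over l converge absolutely for such s. -/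
/-!
Expanding each `1 / (z - s k)` as the geometric series `∑ l, s k ^ l / z ^ (l + 1)` turns a
barycentric sum `∑ k, a k / (z - s k)` into the generating series of the moments
`∑ k, a k * s k ^ l` in `1 / z`. When the first `μ` moments vanish this series starts at
`z ^ -(μ + 1)`, so numerator and denominator are `z ^ -(μ + 1)` and `z ^ -(ν + 1)` times the
shifted moment series, and their quotient carries the factor `z ^ (ν - μ)`.
-/

open Finset

variable {𝕜 ι : Type*} [NormedField 𝕜]

theorem hasSum_pow_div_pow_succ {x z : 𝕜} (h : ‖x‖ < ‖z‖) :
    HasSum (fun l : ℕ => x ^ l / z ^ (l + 1)) (z - x)⁻¹ := by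
  have hz : z ≠ 0 := norm_pos_iff.mp ((norm_nonneg x).trans_lt h)
  have hq : ‖x / z‖ < 1 := by rwa [norm_div, div_lt_one ((norm_nonneg x).trans_lt h)]
  have hsum : (z - x)⁻¹ = z⁻¹ * (1 - x / z)⁻¹ := by
    rw [one_sub_div hz, inv_div, inv_mul_eq_div, div_div_cancel_left' hz]
  rw [hsum]
  refine ((hasSum_geometric_of_norm_lt_one hq).mul_left z⁻¹).congr_fun fun l => ?_
  rw [div_pow, pow_succ]
  field_simp

theorem summable_norm_moment_div_pow (t : Finset ι) (a s : ι → 𝕜) (c : ℕ) {z : 𝕜}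
    (hz : ∀ k ∈ t, ‖s k‖ < ‖z‖) :
    Summable (fun l : ℕ => ‖(∑ k ∈ t, a k * s k ^ (c + l)) / z ^ l‖) := by
  have hgeom : ∀ k ∈ t, Summable (fun l : ℕ => ‖a k‖ * ‖s k‖ ^ c * (‖s k‖ / ‖z‖) ^ l) :=
    fun k hk => (summable_geometric_of_lt_one (by positivity)
      ((div_lt_one ((norm_nonneg _).trans_lt (hz k hk))).2 (hz k hk))).mul_left _
  refine .of_nonneg_of_le (fun _ => norm_nonneg _) (fun l => ?_) (summable_sum hgeom)
  calc ‖(∑ k ∈ t, a k * s k ^ (c + l)) / z ^ l‖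
      ≤ ∑ k ∈ t, ‖a k * s k ^ (c + l) / z ^ l‖ := by rw [sum_div]; exact norm_sum_le _ _
    _ = ∑ k ∈ t, ‖a k‖ * ‖s k‖ ^ c * (‖s k‖ / ‖z‖) ^ l := by
      simp only [norm_div, norm_mul, norm_pow, pow_add, div_pow, mul_div_assoc, mul_assoc]

theorem hasSum_moment_div_pow_succ (t : Finset ι) (a s : ι → 𝕜) {z : 𝕜}
    (hz : ∀ k ∈ t, ‖s k‖ < ‖z‖) :
    HasSum (fun l : ℕ => (∑ k ∈ t, a k * s k ^ l) / z ^ (l + 1)) (∑ k ∈ t, a k / (z - s k)) := by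
  simp_rw [sum_div, mul_div_assoc, div_eq_mul_inv (a _)]
  exact hasSum_sum fun k hk => (hasSum_pow_div_pow_succ (hz k hk)).mul_left (a k)

theorem hasSum_moment_add_div_pow (t : Finset ι) (a s : ι → 𝕜) (μ : ℕ) {z : 𝕜} (hz0 : z ≠ 0)
    (hz : ∀ k ∈ t, ‖s k‖ < ‖z‖) (h0 : ∀ l < μ, ∑ k ∈ t, a k * s k ^ l = 0) :
    HasSum (fun l : ℕ => (∑ k ∈ t, a k * s k ^ (μ + l)) / z ^ l)
      (z ^ (μ + 1) * ∑ k ∈ t, a k / (z - s k)) := by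
  have hlow : ∑ l ∈ range μ, (∑ k ∈ t, a k * s k ^ l) / z ^ (l + 1) = 0 :=
    sum_eq_zero fun l hl => by rw [h0 l (mem_range.1 hl), zero_div]
  have htail := (hasSum_nat_add_iff' μ).2 (hasSum_moment_div_pow_succ t a s hz)
  rw [hlow, sub_zero] at htail
  refine (htail.mul_left (z ^ (μ + 1))).congr_fun fun l => ?_
  rw [add_comm μ l]
  field_simp
  ring

theorem zpow_sub_mul_div_pow_mul {z : 𝕜} (hz : z ≠ 0) (μ ν : ℕ) (N D : 𝕜) :
    z ^ ((ν : ℤ) - μ) * (z ^ (μ + 1) * N / (z ^ (ν + 1) * D)) = N / D := by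
  rw [zpow_sub₀ hz, zpow_natCast, zpow_natCast, mul_div_mul_comm, ← mul_assoc, pow_succ, pow_succ]
  field_simp

theorem barycentric_asymptotic_form_general (m : ℕ) (s w f : ℕ → ℂ) (μ ν : ℕ)
    (hnum0 : ∀ l < μ, ∑ k ∈ Finset.range (m + 1), w k * f k * s k ^ l = 0)
    (hden0 : ∀ l < ν, ∑ k ∈ Finset.range (m + 1), w k * s k ^ l = 0)
    (z : ℂ) (hz : ∀ k ∈ Finset.range (m + 1), ‖s k‖ < ‖z‖) :
    Summable (fun l : ℕ =>
        ‖(∑ k ∈ Finset.range (m + 1), w k * f k * s k ^ (μ + l)) / z ^ l‖) ∧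
    Summable (fun l : ℕ =>
        ‖(∑ k ∈ Finset.range (m + 1), w k * s k ^ (ν + l)) / z ^ l‖) ∧
    (∑ k ∈ Finset.range (m + 1), w k * f k / (z - s k)) /
        (∑ k ∈ Finset.range (m + 1), w k / (z - s k)) =
      z ^ ((ν : ℤ) - μ) *
        ((∑' l : ℕ, (∑ k ∈ Finset.range (m + 1), w k * f k * s k ^ (μ + l)) / z ^ l) /
         (∑' l : ℕ, (∑ k ∈ Finset.range (m + 1), w k * s k ^ (ν + l)) / z ^ l)) := by
  have hz0 : z ≠ 0 := norm_pos_iff.mp ((norm_nonneg _).trans_lt (hz 0 (by simp)))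
  refine ⟨summable_norm_moment_div_pow _ _ s μ hz, summable_norm_moment_div_pow _ w s ν hz, ?_⟩
  rw [(hasSum_moment_add_div_pow _ (fun k => w k * f k) s μ hz0 hz hnum0).tsum_eq,
    (hasSum_moment_add_div_pow _ w s ν hz0 hz hden0).tsum_eq, zpow_sub_mul_div_pow_mul hz0]

/-- Paper's Lemma 4.1: the asymptotic form of the interpolatory barycentric rational
function, valid for `|s|` larger than all support points; both series converge
absolutely there. -/
theorem barycentric_asymptotic_form (m : ℕ) (s w f : ℕ → ℂ) (μ ν : ℕ)
    (hμ : μ ≤ m) (hν : ν ≤ m)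
    (hnum0 : ∀ l < μ, ∑ k ∈ Finset.range (m + 1), w k * f k * s k ^ l = 0)
    (hden0 : ∀ l < ν, ∑ k ∈ Finset.range (m + 1), w k * s k ^ l = 0)
    (z : ℂ) (hz : ∀ k ∈ Finset.range (m + 1), ‖s k‖ < ‖z‖)
    (hden : ∑ k ∈ Finset.range (m + 1), w k / (z - s k) ≠ 0) :
    Summable (fun l : ℕ =>
        ‖(∑ k ∈ Finset.range (m + 1), w k * f k * s k ^ (μ + l)) / z ^ l‖) ∧
    Summable (fun l : ℕ =>
        ‖(∑ k ∈ Finset.range (m + 1), w k * s k ^ (ν + l)) / z ^ l‖) ∧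
    (∑ k ∈ Finset.range (m + 1), w k * f k / (z - s k)) /
        (∑ k ∈ Finset.range (m + 1), w k / (z - s k)) =
      z ^ ((ν : ℤ) - μ) *
        ((∑' l : ℕ, (∑ k ∈ Finset.range (m + 1), w k * f k * s k ^ (μ + l)) / z ^ l) /
         (∑' l : ℕ, (∑ k ∈ Finset.range (m + 1), w k * s k ^ (ν + l)) / z ^ l)) :=
  barycentric_asymptotic_form_general m s w f μ ν hnum0 hden0 z hz
end
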